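/- arXiv:1205.5352 — 3 statements merged into one kernel-verified Lean document; each statement's English description precedes it below -/
import Mathlib

section
/- The element I = f_1 f_1† f_2 f_2† ⋯ f_n f_n† of 𝒞 is a nonzero idempotent (I ≠ 0 and I² = I), and f_j I = 0 for every j = 1,…,n. -/
noncomputable section

/-- The quadratic form `Q(x) = -(x_1^2 + ⋯ + x_m^2)` on `ℂ^m`. -/
def Qform (m : ℕ) : QuadraticForm ℂ (Fin m → ℂ) :=
  QuadraticMap.weightedSumSquares ℂ (fun _ : Fin m => (-1 : ℂ))

/-- The complex Clifford algebra of `ℂ^m` with `Q(x) = -∑ x_j^2`. -/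
abbrev Cl (m : ℕ) : Type := CliffordAlgebra (Qform m)

/-- The generators `e_j`, images of the standard basis vectors. -/
def gen (m : ℕ) (j : Fin m) : Cl m := CliffordAlgebra.ι (Qform m) (Pi.single j 1)

/-- The Witt basis element `f_j = (1/2)(e_j - i e_{n+j})`. -/
def fw (n : ℕ) (j : Fin n) : Cl (2 * n) :=
  (2⁻¹ : ℂ) • (gen (2 * n) ⟨j.val, by have := j.isLt; omega⟩
    - Complex.I • gen (2 * n) ⟨n + j.val, by have := j.isLt; omega⟩)

/-- The Witt basis element `f_j† = -(1/2)(e_j + i e_{n+j})`. -/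
def fwd (n : ℕ) (j : Fin n) : Cl (2 * n) :=
  -((2⁻¹ : ℂ) • (gen (2 * n) ⟨j.val, by have := j.isLt; omega⟩
    + Complex.I • gen (2 * n) ⟨n + j.val, by have := j.isLt; omega⟩))

/-- The Hermitian vector variable `𝐳 = ∑ z_j f_j`. -/
def zvec (n : ℕ) (z : Fin n → ℂ) : Cl (2 * n) := ∑ j, z j • fw n j

/-- The Hermitian conjugate vector variable `𝐳† = ∑ conj(z_j) f_j†`. -/
def zvecd (n : ℕ) (z : Fin n → ℂ) : Cl (2 * n) :=
  ∑ j, (starRingEnd ℂ) (z j) • fwd n j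

/-- The fermionic Euler operator `β = ∑ f_j† f_j`. -/
def beta (n : ℕ) : Cl (2 * n) := ∑ j, fwd n j * fw n j

/-- The primitive idempotent `I = f_1 f_1† f_2 f_2† ⋯ f_n f_n†` (ordered product). -/
def idem (n : ℕ) : Cl (2 * n) := (List.ofFn (fun j : Fin n => fw n j * fwd n j)).prod

/-!
The elements `f_j`, `f_j†` satisfy the canonical anticommutation relations: `f_j² = f_j†² = 0`,
`f_j f_j† + f_j† f_j = 1`, and generators with different indices anticommute. These relations
alone give the theorem. Each `p_j = f_j f_j†` is idempotent, and `p_j` commutes with `f_k`, `f_k†`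
and `p_k` for `k ≠ j`, so the product `I` of the `p_j` is idempotent and `f_j I = p_1 ⋯ (f_j p_j) ⋯`
vanishes since `f_j² = 0`. For `I ≠ 0`: if `y` commutes with `f_j` then `y = p_j y + f_j† (p_j y) f_j`,
so `p_j y = 0` forces `y = 0`; peeling the factors off `I` one at a time reduces `I ≠ 0` to `1 ≠ 0`.
-/

structure IsCARFamily {ι A : Type*} [Ring A] (a b : ι → A) : Prop where
  mul_self_left (j : ι) : a j * a j = 0
  mul_self_right (j : ι) : b j * b j = 0
  anticomm_left {j k : ι} : j ≠ k → a j * a k + a k * a j = 0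
  anticomm_right {j k : ι} : j ≠ k → b j * b k + b k * b j = 0
  anticomm_left_right {j k : ι} : j ≠ k → a j * b k + b k * a j = 0
  mul_add_mul_self (j : ι) : a j * b j + b j * a j = 1

theorem commute_mul_of_anticomm {A : Type*} [Ring A] {x y z : A} (hy : x * y + y * x = 0)
    (hz : x * z + z * x = 0) : Commute x (y * z) := by
  rw [add_eq_zero_iff_eq_neg] at hy hz
  calc x * (y * z) = -(y * (x * z)) := by rw [← mul_assoc, hy, neg_mul, mul_assoc]
    _ = y * z * x := by rw [hz, mul_neg, neg_neg, mul_assoc]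

def pairProd {ι A : Type*} [Ring A] (a b : ι → A) (l : List ι) : A :=
  (l.map fun j => a j * b j).prod

namespace IsCARFamily

variable {ι A : Type*} [Ring A] {a b : ι → A}

theorem symm (h : IsCARFamily a b) : IsCARFamily b a where
  mul_self_left := h.mul_self_right
  mul_self_right := h.mul_self_left
  anticomm_left := h.anticomm_right
  anticomm_right := h.anticomm_left
  anticomm_left_right hjk := by rw [add_comm]; exact h.anticomm_left_right (Ne.symm hjk)
  mul_add_mul_self j := by rw [add_comm]; exact h.mul_add_mul_self j

theorem commute_left_mul (h : IsCARFamily a b) {j k : ι} (hjk : j ≠ k) :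
    Commute (a j) (a k * b k) :=
  commute_mul_of_anticomm (h.anticomm_left hjk) (h.anticomm_left_right hjk)

theorem commute_right_mul (h : IsCARFamily a b) {j k : ι} (hjk : j ≠ k) :
    Commute (b j) (a k * b k) := by
  rw [eq_sub_of_add_eq (h.mul_add_mul_self k)]
  exact (Commute.one_right _).sub_right (h.symm.commute_left_mul hjk)

theorem isIdempotentElem_mul (h : IsCARFamily a b) (j : ι) : IsIdempotentElem (a j * b j) :=
  calc a j * b j * (a j * b j) = a j * (b j * a j) * b j := by noncomm_ring
    _ = a j * (1 - a j * b j) * b j := by rw [← h.mul_add_mul_self j, add_sub_cancel_left]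
    _ = a j * b j - (a j * a j) * (b j * b j) := by noncomm_ring
    _ = a j * b j := by rw [h.mul_self_left, zero_mul, sub_zero]

theorem eq_zero_of_mul_mul_eq_zero (h : IsCARFamily a b) {j : ι} {y : A} (ha : Commute (a j) y)
    (hy : a j * b j * y = 0) : y = 0 :=
  calc y = (a j * b j + b j * a j * (b j * a j)) * y := by
        rw [(h.symm.isIdempotentElem_mul j).eq, h.mul_add_mul_self, one_mul]
    _ = a j * b j * y + b j * (a j * b j) * (a j * y) := by noncomm_ring
    _ = a j * b j * y + b j * (a j * b j * y) * a j := by rw [ha.eq]; noncomm_ring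
    _ = 0 := by rw [hy, mul_zero, zero_mul, add_zero]

theorem pairProd_cons (j : ι) (l : List ι) :
    pairProd a b (j :: l) = a j * b j * pairProd a b l := List.prod_cons

theorem commute_pairProd {x : A} {l : List ι} (hx : ∀ k ∈ l, Commute x (a k * b k)) :
    Commute x (pairProd a b l) :=
  Commute.list_prod_right _ _ <| by
    simp only [List.mem_map]
    rintro _ ⟨k, hk, rfl⟩
    exact hx k hk

theorem commute_left_pairProd (h : IsCARFamily a b) {j : ι} {l : List ι} (hj : j ∉ l) :
    Commute (a j) (pairProd a b l) :=
  commute_pairProd fun _ hk => h.commute_left_mul (ne_of_mem_of_not_mem hk hj).symm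

theorem commute_right_pairProd (h : IsCARFamily a b) {j : ι} {l : List ι} (hj : j ∉ l) :
    Commute (b j) (pairProd a b l) :=
  commute_pairProd fun _ hk => h.commute_right_mul (ne_of_mem_of_not_mem hk hj).symm

theorem isIdempotentElem_pairProd (h : IsCARFamily a b) {l : List ι} (hl : l.Nodup) :
    IsIdempotentElem (pairProd a b l) := by
  induction l with
  | nil => exact IsIdempotentElem.one
  | cons j l ih =>
    rw [List.nodup_cons] at hl
    exact (h.isIdempotentElem_mul j).mul_of_commute
      ((h.commute_left_pairProd hl.1).mul_left (h.commute_right_pairProd hl.1)) (ih hl.2)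

theorem mul_pairProd_eq_zero (h : IsCARFamily a b) {j : ι} {l : List ι} (hj : j ∈ l) :
    a j * pairProd a b l = 0 := by
  induction l with
  | nil => cases hj
  | cons k l ih =>
    rw [pairProd_cons]
    obtain rfl | hjk := eq_or_ne j k
    · rw [← mul_assoc, ← mul_assoc, h.mul_self_left, zero_mul, zero_mul]
    · rw [← mul_assoc, (h.commute_left_mul hjk).eq, mul_assoc, ih (List.mem_of_ne_of_mem hjk hj),
        mul_zero]

theorem pairProd_ne_zero [Nontrivial A] (h : IsCARFamily a b) {l : List ι} (hl : l.Nodup) :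
    pairProd a b l ≠ 0 := by
  induction l with
  | nil => exact one_ne_zero
  | cons j l ih =>
    rw [List.nodup_cons] at hl
    rw [pairProd_cons]
    exact fun hzero => ih hl.2 (h.eq_zero_of_mul_mul_eq_zero (h.commute_left_pairProd hl.1) hzero)

end IsCARFamily

open CliffordAlgebra

theorem Qform_apply (m : ℕ) (v : Fin m → ℂ) : Qform m v = -(v ⬝ᵥ v) := by
  simp [Qform, QuadraticMap.weightedSumSquares_apply, dotProduct]

theorem polar_Qform (m : ℕ) (u v : Fin m → ℂ) :
    QuadraticMap.polar (Qform m) u v = -2 * (u ⬝ᵥ v) := by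
  simp only [QuadraticMap.polar, Qform_apply, add_dotProduct, dotProduct_add, dotProduct_comm v u]
  ring

namespace WittBasis

variable {n : ℕ}

def lo (j : Fin n) : Fin (2 * n) := ⟨j, by omega⟩

def hi (j : Fin n) : Fin (2 * n) := ⟨n + j, by omega⟩

def pairVec (j : Fin n) (c d : ℂ) : Fin (2 * n) → ℂ := Pi.single (lo j) c + Pi.single (hi j) d

theorem pairVec_dotProduct (j k : Fin n) (c d c' d' : ℂ) :
    pairVec j c d ⬝ᵥ pairVec k c' d' = if j = k then c * c' + d * d' else 0 := by
  have hlh : ∀ j k : Fin n, lo j ≠ hi k := fun j k h => by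
    have : (j : ℕ) = n + k := Fin.val_eq_of_eq h
    omega
  by_cases hjk : j = k
  · subst hjk
    simp [pairVec, hlh, (hlh _ _).symm]
  · have hl : lo j ≠ lo k := fun h => hjk (Fin.ext (Fin.val_eq_of_eq h :))
    have hh : hi j ≠ hi k := fun h => hjk (Fin.ext (Nat.add_left_cancel (Fin.val_eq_of_eq h :)))
    simp [pairVec, hlh, (hlh _ _).symm, hl, hh, hjk]

theorem ι_pairVec_mul_self (j : Fin n) (c d : ℂ) :
    ι (Qform (2 * n)) (pairVec j c d) * ι (Qform (2 * n)) (pairVec j c d)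
      = algebraMap ℂ _ (-(c * c + d * d)) := by
  rw [ι_sq_scalar, Qform_apply, pairVec_dotProduct, if_pos rfl]

theorem ι_pairVec_anticomm (j k : Fin n) (c d c' d' : ℂ) :
    ι (Qform (2 * n)) (pairVec j c d) * ι (Qform (2 * n)) (pairVec k c' d')
      + ι (Qform (2 * n)) (pairVec k c' d') * ι (Qform (2 * n)) (pairVec j c d)
      = algebraMap ℂ _ (if j = k then -2 * (c * c' + d * d') else 0) := by
  rw [ι_mul_ι_add_swap, polar_Qform, pairVec_dotProduct, mul_ite, mul_zero]

theorem isCARFamily_ι_pairVec {c d c' d' : ℂ} (h : c * c + d * d = 0) (h' : c' * c' + d' * d' = 0)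
    (hdual : -2 * (c * c' + d * d') = 1) :
    IsCARFamily (fun j : Fin n => ι (Qform (2 * n)) (pairVec j c d))
      (fun j => ι (Qform (2 * n)) (pairVec j c' d')) where
  mul_self_left j := by rw [ι_pairVec_mul_self, h, neg_zero, map_zero]
  mul_self_right j := by rw [ι_pairVec_mul_self, h', neg_zero, map_zero]
  anticomm_left hjk := by simp [ι_pairVec_anticomm, hjk]
  anticomm_right hjk := by simp [ι_pairVec_anticomm, hjk]
  anticomm_left_right hjk := by simp [ι_pairVec_anticomm, hjk]
  mul_add_mul_self j := by simp [ι_pairVec_anticomm, hdual]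

theorem ι_pairVec (j : Fin n) (c d : ℂ) :
    ι (Qform (2 * n)) (pairVec j c d) = c • gen (2 * n) (lo j) + d • gen (2 * n) (hi j) := by
  rw [pairVec, gen, gen, ← map_smul, ← map_smul, ← map_add, ← Pi.single_smul, ← Pi.single_smul,
    smul_eq_mul, smul_eq_mul, mul_one, mul_one]

theorem fw_eq_ι_pairVec (j : Fin n) : fw n j = ι (Qform (2 * n)) (pairVec j 2⁻¹ (-(2⁻¹ * Complex.I))) := by
  rw [ι_pairVec, fw, lo, hi]
  module

theorem fwd_eq_ι_pairVec (j : Fin n) :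
    fwd n j = ι (Qform (2 * n)) (pairVec j (-2⁻¹) (-(2⁻¹ * Complex.I))) := by
  rw [ι_pairVec, fwd, lo, hi]
  module

theorem isCARFamily_fw_fwd (n : ℕ) : IsCARFamily (fw n) (fwd n) := by
  rw [funext (fw_eq_ι_pairVec (n := n)), funext (fwd_eq_ι_pairVec (n := n))]
  exact isCARFamily_ι_pairVec (by linear_combination (4⁻¹ : ℂ) * Complex.I_mul_I)
    (by linear_combination (4⁻¹ : ℂ) * Complex.I_mul_I)
    (by linear_combination (-2⁻¹ : ℂ) * Complex.I_mul_I)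

end WittBasis

theorem idem_properties_general (n : ℕ) :
    idem n ≠ 0 ∧ idem n * idem n = idem n ∧ ∀ j : Fin n, fw n j * idem n = 0 := by
  have hidem : idem n = pairProd (fw n) (fwd n) (List.finRange n) := by
    rw [idem, List.ofFn_eq_map]
    rfl
  have hCAR := WittBasis.isCARFamily_fw_fwd n
  rw [hidem]
  exact ⟨hCAR.pairProd_ne_zero (List.nodup_finRange n),
    hCAR.isIdempotentElem_pairProd (List.nodup_finRange n),
    fun j => hCAR.mul_pairProd_eq_zero (List.mem_finRange j)⟩

/-- `I = f_1 f_1† ⋯ f_n f_n†` is a nonzero idempotent annihilated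
on the left by every `f_j`. -/
theorem idem_properties (n : ℕ) (hn : 1 ≤ n) :
    idem n ≠ 0 ∧ idem n * idem n = idem n ∧ ∀ j : Fin n, fw n j * idem n = 0 :=
  idem_properties_general n
end
end

section
/- For all elements a, b of 𝒞 the following two equivalences hold: (i) f_0† a + b = 0 if and only if f_0† a + f_0† f_0 b = 0 and f_0 f_0† b = 0; (ii) f_0 a + b = 0 if and only if f_0 a + f_0 f_0† b = 0 and f_0† f_0 b = 0. (Applied pointwise with a the derivative ∂_{z_0}f, resp. ∂_{z̄_0}f, and b the value of ∂_𝐳 f, resp. ∂_{𝐳†} f, this shows that the h-monogenic system (f_0†∂_{z_0} + ∂_𝐳)f = 0 = (f_0∂_{z̄_0} + ∂_{𝐳†})f is equivalent to the four-equation system (f_0†∂_{z_0} + f_0†f_0 ∂_𝐳)f = 0, f_0f_0†∂_𝐳 f = 0, (f_0∂_{z̄_0} + f_0f_0† ∂_{𝐳†})f = 0, f_0†f_0 ∂_{𝐳†} f = 0.) -/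
/-!
`f₀` and `f₀†` form a fermionic pair: both square to zero and `f₀ f₀† + f₀† f₀ = 1`. In any
ring, if `q² = 0` and `pq + qp = 1`, then `qpq = q`, so `b = -qa` forces `qpb = -qa` and
`pqb = 0`; conversely `b = pqb + qpb`, so the two equations give back `qa + b = 0`.
Taking `(p, q) = (f₀, f₀†)` and `(f₀†, f₀)` gives the two equivalences.
-/

noncomputable section

theorem mul_add_eq_zero_iff_of_mul_self_eq_zero {R : Type*} [Ring R] {p q : R}
    (hq : q * q = 0) (hpq : p * q + q * p = 1) (a b : R) :
    q * a + b = 0 ↔ q * a + q * p * b = 0 ∧ p * q * b = 0 := by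
  have hqpq : q * p * q = q := by
    rw [mul_assoc, eq_sub_of_add_eq hpq, mul_sub, mul_one, ← mul_assoc, hq, zero_mul, sub_zero]
  constructor
  · intro h
    obtain rfl : b = -(q * a) := eq_neg_of_add_eq_zero_right h
    refine ⟨?_, ?_⟩
    · rw [mul_neg, ← mul_assoc, hqpq, add_neg_cancel]
    · rw [mul_neg, ← mul_assoc, mul_assoc p, hq, mul_zero, zero_mul, neg_zero]
  · rintro ⟨h, hpqb⟩
    have hb : b = q * p * b := by
      calc b = (p * q + q * p) * b := by rw [hpq, one_mul]
        _ = q * p * b := by rw [add_mul, hpqb, zero_add]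
    rwa [← hb] at h

section Isotropic

variable {A : Type*} [Ring A] [Algebra ℂ A] {u v : A}

theorem add_smul_mul_self_eq_zero (hu : u * u = -1) (hv : v * v = -1) (huv : u * v + v * u = 0)
    {c : ℂ} (hc : c * c = -1) : (u + c • v) * (u + c • v) = 0 := by
  have hexp : (u + c • v) * (u + c • v) = u * u + c • (u * v + v * u) + (c * c) • (v * v) := by
    simp only [add_mul, mul_add, smul_mul_assoc, mul_smul_comm, smul_add, smul_smul]
    abel
  rw [hexp, hu, hv, huv, hc, smul_zero, add_zero, neg_smul, one_smul, neg_neg,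
    neg_add_cancel]

theorem sub_I_smul_mul_add_I_smul_add (hu : u * u = -1) (hv : v * v = -1) :
    (u - Complex.I • v) * (u + Complex.I • v) + (u + Complex.I • v) * (u - Complex.I • v) =
      (-4 : ℂ) • 1 := by
  have hexp : (u - Complex.I • v) * (u + Complex.I • v) + (u + Complex.I • v) * (u - Complex.I • v)
      = (2 : ℂ) • (u * u) - (2 * Complex.I * Complex.I) • (v * v) := by
    simp only [add_mul, mul_add, sub_mul, mul_sub, smul_mul_assoc, mul_smul_comm]
    module
  rw [hexp, hu, hv, mul_assoc, Complex.I_mul_I, ← neg_one_smul ℂ (1 : A)]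
  module

end Isotropic

theorem gen_mul_self (m : ℕ) (j : Fin m) : gen m j * gen m j = -1 := by
  have hQ : Qform m (Pi.single j 1) = -1 := by
    simp [Qform, QuadraticMap.weightedSumSquares_apply, Pi.single_apply]
  rw [gen, CliffordAlgebra.ι_sq_scalar, hQ, map_neg, map_one]

theorem gen_mul_add_swap (m : ℕ) {j k : Fin m} (h : j ≠ k) :
    gen m j * gen m k + gen m k * gen m j = 0 := by
  rw [gen, gen, CliffordAlgebra.ι_mul_ι_add_swap, map_eq_zero_iff _ (algebraMap ℂ _).injective,
    QuadraticMap.polar]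
  simp only [Qform, QuadraticMap.weightedSumSquares_apply, ← Finset.sum_sub_distrib]
  refine Finset.sum_eq_zero fun i _ => ?_
  rcases eq_or_ne i j with rfl | hij <;> rcases eq_or_ne i k with rfl | hik <;>
    simp_all

section Witt

variable (n : ℕ) (j : Fin n)

theorem gen_witt_mul_add_swap :
    gen (2 * n) ⟨j.val, by omega⟩ * gen (2 * n) ⟨n + j.val, by omega⟩
      + gen (2 * n) ⟨n + j.val, by omega⟩ * gen (2 * n) ⟨j.val, by omega⟩ = 0 :=
  gen_mul_add_swap _ (by simp [Fin.ext_iff, j.pos.ne'])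

theorem fw_mul_self : fw n j * fw n j = 0 := by
  rw [fw, smul_mul_smul_comm, sub_eq_add_neg, ← neg_smul,
    add_smul_mul_self_eq_zero (gen_mul_self _ _) (gen_mul_self _ _) (gen_witt_mul_add_swap n j)
      (by rw [neg_mul_neg, Complex.I_mul_I]),
    smul_zero]

theorem fwd_mul_self : fwd n j * fwd n j = 0 := by
  rw [fwd, neg_mul_neg, smul_mul_smul_comm,
    add_smul_mul_self_eq_zero (gen_mul_self _ _) (gen_mul_self _ _) (gen_witt_mul_add_swap n j)
      Complex.I_mul_I,
    smul_zero]

theorem fw_mul_fwd_add_fwd_mul_fw : fw n j * fwd n j + fwd n j * fw n j = 1 := by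
  rw [fw, fwd, mul_neg, neg_mul, ← neg_add, smul_mul_smul_comm, smul_mul_smul_comm, ← smul_add,
    sub_I_smul_mul_add_I_smul_add (gen_mul_self _ _) (gen_mul_self _ _), smul_smul]
  norm_num

end Witt

theorem hmonogenic_system_split_general (n : ℕ)
    (a b : Cl (2 * (n + 1))) :
    (fwd (n + 1) 0 * a + b = 0 ↔
      fwd (n + 1) 0 * a + fwd (n + 1) 0 * fw (n + 1) 0 * b = 0 ∧
      fw (n + 1) 0 * fwd (n + 1) 0 * b = 0) ∧
    (fw (n + 1) 0 * a + b = 0 ↔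
      fw (n + 1) 0 * a + fw (n + 1) 0 * fwd (n + 1) 0 * b = 0 ∧
      fwd (n + 1) 0 * fw (n + 1) 0 * b = 0) :=
  have hpq := fw_mul_fwd_add_fwd_mul_fw (n + 1) 0
  ⟨mul_add_eq_zero_iff_of_mul_self_eq_zero (fwd_mul_self _ _) hpq a b,
    mul_add_eq_zero_iff_of_mul_self_eq_zero (fw_mul_self _ _) ((add_comm _ _).trans hpq) a b⟩

/-- The algebraic equivalences underlying the splitting of the
h-monogenic system into the four-equation system: for all `a, b` in the Clifford
algebra of `ℂ^{2n+2}` (with `f_0, f_0†` the first Witt basis elements),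
(i) `f_0† a + b = 0 ↔ f_0† a + f_0† f_0 b = 0 ∧ f_0 f_0† b = 0`;
(ii) `f_0 a + b = 0 ↔ f_0 a + f_0 f_0† b = 0 ∧ f_0† f_0 b = 0`. -/
theorem hmonogenic_system_split (n : ℕ) (hn : 1 ≤ n)
    (a b : Cl (2 * (n + 1))) :
    (fwd (n + 1) 0 * a + b = 0 ↔
      fwd (n + 1) 0 * a + fwd (n + 1) 0 * fw (n + 1) 0 * b = 0 ∧
      fw (n + 1) 0 * fwd (n + 1) 0 * b = 0) ∧
    (fw (n + 1) 0 * a + b = 0 ↔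
      fw (n + 1) 0 * a + fw (n + 1) 0 * fwd (n + 1) 0 * b = 0 ∧
      fwd (n + 1) 0 * fw (n + 1) 0 * b = 0) :=
  hmonogenic_system_split_general n a b
end
end

section
/- Let a₁, a₂ : ℝ → ℂ be differentiable functions, and define F : ℝ^{2n} → 𝒞 by F(x,y) = a₁(ν)·1 + a₂(ν)·𝐳†(z)𝐳(z), where z_j = x_j + i y_j, ν = |z|² = Σ_{j=1}^n (x_j² + y_j²), 𝐳(z) = Σ_{j=1}^n z_j f_j and 𝐳†(z) = Σ_{j=1}^n conj(z_j) f_j†. Then F is differentiable and at every point ∂_z† F = (a₁′(ν) + (n+1)a₂(ν) + ν a₂′(ν))·𝐳(z) − a₂(ν)·𝐳(z)β, where β = Σ_{j=1}^n f_j† f_j; equivalently, ∂_z† F = 𝐳(z)·(a₁′(ν) + (n+1−β)a₂(ν) + ν a₂′(ν)) with the convention that scalars commute with 𝐳(z). -/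
noncomputable section

/-- The domain `ℝ^{2n}`, with coordinates written `(x_1,…,x_n,y_1,…,y_n)`. -/
abbrev Dom (n : ℕ) : Type := (Fin n → ℝ) × (Fin n → ℝ)

/-- The coordinate direction `x_j`. -/
def ex (n : ℕ) (j : Fin n) : Dom n := (Pi.single j 1, 0)

/-- The coordinate direction `y_j`. -/
def ey (n : ℕ) (j : Fin n) : Dom n := (0, Pi.single j 1)

/-- The complex coordinates `z_j = x_j + i y_j` of a point. -/
def zc (n : ℕ) (pt : Dom n) : Fin n → ℂ := fun j => (pt.1 j : ℂ) + Complex.I * (pt.2 j : ℂ)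

/-- `ν = |z|² = ∑ (x_j² + y_j²)`. -/
def nu (n : ℕ) (pt : Dom n) : ℝ := ∑ j, ((pt.1 j) ^ 2 + (pt.2 j) ^ 2)

/-- `g' pt v` is the directional (line) derivative of the Clifford-algebra valued
function `g` at `pt` in the direction `v`, tested against all `ℂ`-linear
functionals (an equivalent description of differentiability, as the Clifford
algebra is a finite-dimensional complex vector space). -/
def IsWeakLineDeriv (n : ℕ) (g : Dom n → Cl (2 * n))
    (g' : Dom n → Dom n → Cl (2 * n)) : Prop :=
  ∀ φ : Module.Dual ℂ (Cl (2 * n)), ∀ pt v,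
    HasLineDerivAt ℝ (fun q => φ (g q)) (φ (g' pt v)) pt v

/-- The Hermitian Dirac operator `∂_z F = ∑_j f_j† (1/2)(∂_{x_j} F − i ∂_{y_j} F)`
expressed through the (directional) derivative `F'` of `F`. -/
def DzOf (n : ℕ) (F' : Dom n → Dom n → Cl (2 * n)) (pt : Dom n) : Cl (2 * n) :=
  ∑ j, fwd n j * ((2⁻¹ : ℂ) • (F' pt (ex n j) - Complex.I • F' pt (ey n j)))

/-- The Hermitian Dirac operator `∂_z† F = ∑_j f_j (1/2)(∂_{x_j} F + i ∂_{y_j} F)`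
expressed through the (directional) derivative `F'` of `F`. -/
def DzdOf (n : ℕ) (F' : Dom n → Dom n → Cl (2 * n)) (pt : Dom n) : Cl (2 * n) :=
  ∑ j, fw n j * ((2⁻¹ : ℂ) • (F' pt (ex n j) + Complex.I • F' pt (ey n j)))


/-!
Along a line `pt + t v` both `ν` and `𝐳†𝐳` are quadratic polynomials in `t`, so `F` is
line-differentiable, with derivative `ν'(v) (a₁'(ν) + a₂'(ν) 𝐳†𝐳) + a₂(ν) (𝐳_v† 𝐳 + 𝐳† 𝐳_v)`.
Its Wirtinger combination `½ (∂_{x_j} + i ∂_{y_j})` is `z_j (a₁'(ν) + a₂'(ν) 𝐳†𝐳) + a₂(ν) f_j† 𝐳`.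
Multiplying by `f_j` and summing, the Witt relations `{f_j, f_k} = 0`, `{f_j, f_k†} = δ_jk`
give `𝐳 𝐳† 𝐳 = ν 𝐳`, `∑ f_j f_j† = n - β` and `β 𝐳 = 𝐳 β - 𝐳`, which yields the formula.
-/

open Finset

section LineDeriv

variable {𝕜 E : Type*} [NontriviallyNormedField 𝕜] [AddCommGroup E] [Module 𝕜 E] {x v : E}

lemma hasLineDerivAt_of_eq_quadratic {F : Type*} [NormedAddCommGroup F] [NormedSpace 𝕜 F]
    {f : E → F} {a b c : F} (hf : ∀ t : 𝕜, f (x + t • v) = a + t • b + t ^ 2 • c) :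
    HasLineDerivAt 𝕜 f b x v := by
  have hquad : HasDerivAt (fun t : 𝕜 => a + t • b + t ^ 2 • c) b 0 := by
    simpa using (((hasDerivAt_id (0 : 𝕜)).smul_const b).const_add a).fun_add
      ((hasDerivAt_pow 2 (0 : 𝕜)).smul_const c)
  exact hquad.congr_of_eventuallyEq (.of_forall hf)

variable {𝔸 : Type*} [NormedRing 𝔸] [NormedAlgebra 𝕜 𝔸]

lemma HasLineDerivAt.add {f g : E → 𝔸} {f' g' : 𝔸} (hf : HasLineDerivAt 𝕜 f f' x v)
    (hg : HasLineDerivAt 𝕜 g g' x v) : HasLineDerivAt 𝕜 (fun y => f y + g y) (f' + g') x v :=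
  HasDerivAt.fun_add hf hg

lemma HasLineDerivAt.mul_const {f : E → 𝔸} {f' : 𝔸} (hf : HasLineDerivAt 𝕜 f f' x v) (c : 𝔸) :
    HasLineDerivAt 𝕜 (fun y => f y * c) (f' * c) x v :=
  HasDerivAt.mul_const hf c

lemma HasLineDerivAt.mul {f g : E → 𝔸} {f' g' : 𝔸} (hf : HasLineDerivAt 𝕜 f f' x v)
    (hg : HasLineDerivAt 𝕜 g g' x v) :
    HasLineDerivAt 𝕜 (fun y => f y * g y) (f' * g x + f x * g') x v := by
  have hfg := HasDerivAt.fun_mul hf hg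
  rwa [zero_smul, add_zero] at hfg

lemma HasDerivAt.comp_hasLineDerivAt {l : 𝕜 → 𝔸} {l' : 𝔸} {h : E → 𝕜} {h' : 𝕜}
    (hl : HasDerivAt l l' (h x)) (hh : HasLineDerivAt 𝕜 h h' x v) :
    HasLineDerivAt 𝕜 (fun y => l (h y)) (h' • l') x v := by
  have hl0 : HasDerivAt l l' (h (x + (0 : 𝕜) • v)) := by simpa using hl
  exact hl0.scomp (0 : 𝕜) hh

end LineDeriv

lemma ι_mul_ι_add_swap_Qform {m : ℕ} (u v : Fin m → ℂ) :
    CliffordAlgebra.ι (Qform m) u * CliffordAlgebra.ι (Qform m) v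
      + CliffordAlgebra.ι (Qform m) v * CliffordAlgebra.ι (Qform m) u
      = algebraMap ℂ (Cl m) (-2 * (u ⬝ᵥ v)) := by
  rw [CliffordAlgebra.ι_mul_ι_add_swap]
  congr 1
  simp only [QuadraticMap.polar, Qform, QuadraticMap.weightedSumSquares_apply, dotProduct,
    mul_sum, ← sum_sub_distrib]
  refine sum_congr rfl fun i _ => ?_
  simp only [Pi.add_apply, smul_eq_mul]
  ring

section Witt

variable (n : ℕ)

def xIdx (j : Fin n) : Fin (2 * n) := ⟨j.val, by omega⟩
def yIdx (j : Fin n) : Fin (2 * n) := ⟨n + j.val, by omega⟩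

def wittVec (j : Fin n) : Fin (2 * n) → ℂ :=
  (2⁻¹ : ℂ) • (Pi.single (xIdx n j) 1 - Complex.I • Pi.single (yIdx n j) 1)

def wittVecDual (j : Fin n) : Fin (2 * n) → ℂ :=
  -((2⁻¹ : ℂ) • (Pi.single (xIdx n j) 1 + Complex.I • Pi.single (yIdx n j) 1))

lemma fw_eq_ι (j : Fin n) : fw n j = CliffordAlgebra.ι (Qform (2 * n)) (wittVec n j) := by
  simp [fw, gen, wittVec, xIdx, yIdx]

lemma fwd_eq_ι (j : Fin n) : fwd n j = CliffordAlgebra.ι (Qform (2 * n)) (wittVecDual n j) := by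
  simp [fwd, gen, wittVecDual, xIdx, yIdx]

variable {n}

lemma xIdx_eq_xIdx {j k : Fin n} : xIdx n j = xIdx n k ↔ j = k := by
  simp [xIdx, Fin.ext_iff]

lemma yIdx_eq_yIdx {j k : Fin n} : yIdx n j = yIdx n k ↔ j = k := by
  simp [yIdx, Fin.ext_iff]

lemma xIdx_ne_yIdx (j k : Fin n) : xIdx n j ≠ yIdx n k := by
  simp [xIdx, yIdx, Fin.ext_iff]; omega

lemma yIdx_ne_xIdx (j k : Fin n) : yIdx n j ≠ xIdx n k := (xIdx_ne_yIdx k j).symm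

lemma wittVec_dotProduct_wittVec (j k : Fin n) : wittVec n j ⬝ᵥ wittVec n k = 0 := by
  by_cases h : j = k <;>
    simp [wittVec, h, dotProduct_sub, xIdx_eq_xIdx, yIdx_eq_yIdx, xIdx_ne_yIdx, yIdx_ne_xIdx]
  ring_nf; simp

lemma wittVec_dotProduct_wittVecDual (j k : Fin n) :
    wittVec n j ⬝ᵥ wittVecDual n k = if j = k then -2⁻¹ else 0 := by
  by_cases h : j = k <;>
    simp [wittVec, wittVecDual, h, dotProduct_add, xIdx_eq_xIdx, yIdx_eq_yIdx, xIdx_ne_yIdx,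
      yIdx_ne_xIdx]
  ring_nf; simp; norm_num

end Witt

section Relations

variable {n : ℕ}

lemma fw_mul_fw_add_swap (j k : Fin n) : fw n j * fw n k + fw n k * fw n j = 0 := by
  simp [fw_eq_ι, ι_mul_ι_add_swap_Qform, wittVec_dotProduct_wittVec]

lemma fw_mul_fwd_add_swap (j k : Fin n) :
    fw n j * fwd n k + fwd n k * fw n j = if j = k then 1 else 0 := by
  rw [fw_eq_ι, fwd_eq_ι, ι_mul_ι_add_swap_Qform, wittVec_dotProduct_wittVecDual]
  split_ifs <;> simp

end Relations

lemma sum_smul_mul_sum_smul_add_swap {ι R A : Type*} [Fintype ι] [CommSemiring R] [Ring A]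
    [Algebra R A] (c d : ι → R) (u v : ι → A) :
    (∑ j, c j • u j) * (∑ k, d k • v k) + (∑ k, d k • v k) * (∑ j, c j • u j)
      = ∑ j, ∑ k, (c j * d k) • (u j * v k + v k * u j) := by
  simp only [sum_mul_sum, smul_mul_smul_comm, smul_add, sum_add_distrib]
  rw [sum_comm (s := univ) (t := univ) (f := fun k j => (d k * c j) • (v k * u j))]
  simp only [mul_comm (d _)]

section HermitianVariables

variable {n : ℕ}

lemma zvec_mul_self (z : Fin n → ℂ) : zvec n z * zvec n z = 0 := by
  have h := sum_smul_mul_sum_smul_add_swap z z (fw n) (fw n)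
  simp only [fw_mul_fw_add_swap, smul_zero, sum_const_zero, ← two_smul ℂ] at h
  simpa [zvec] using h

lemma zvec_mul_zvecd_add_swap (z : Fin n → ℂ) :
    zvec n z * zvecd n z + zvecd n z * zvec n z
      = (∑ j, z j * starRingEnd ℂ (z j)) • 1 := by
  rw [zvec, zvecd, sum_smul_mul_sum_smul_add_swap]
  simp [fw_mul_fwd_add_swap, sum_smul]

lemma zvec_mul_zvecd_mul_zvec (z : Fin n → ℂ) :
    zvec n z * (zvecd n z * zvec n z) = (∑ j, z j * starRingEnd ℂ (z j)) • zvec n z := by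
  rw [← mul_assoc, ← add_sub_cancel_right (zvec n z * zvecd n z) (zvecd n z * zvec n z),
    zvec_mul_zvecd_add_swap, sub_mul, mul_assoc, zvec_mul_self]
  simp

lemma fw_mul_fwd_mul_fw (j k : Fin n) :
    fw n j * (fwd n k * fw n k) = fwd n k * fw n k * fw n j + if j = k then fw n k else 0 := by
  have expand : fw n j * (fwd n k * fw n k)
      = (fw n j * fwd n k + fwd n k * fw n j) * fw n k
        - fwd n k * (fw n j * fw n k + fw n k * fw n j) + fwd n k * fw n k * fw n j := by
    noncomm_ring
  rw [expand, fw_mul_fwd_add_swap, fw_mul_fw_add_swap]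
  split_ifs <;> simp [add_comm]

lemma zvec_mul_beta (z : Fin n → ℂ) : zvec n z * beta n = beta n * zvec n z + zvec n z := by
  simp only [zvec, beta, sum_mul, mul_sum, smul_mul_assoc, mul_smul_comm, fw_mul_fwd_mul_fw,
    smul_add, sum_add_distrib, smul_sum]
  congr 1
  · exact sum_comm
  · simp

lemma sum_fw_mul_fwd : ∑ j, fw n j * fwd n j = (n : ℂ) • 1 - beta n := by
  rw [beta, eq_sub_iff_add_eq, ← sum_add_distrib]
  simp [fw_mul_fwd_add_swap, Nat.cast_smul_eq_nsmul]

end HermitianVariables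

section Coordinates

variable {n : ℕ}

lemma zvec_single (j : Fin n) (c : ℂ) : zvec n (Pi.single j c) = c • fw n j := by
  simp [zvec, Pi.single_apply]

lemma zvecd_single (j : Fin n) (c : ℂ) :
    zvecd n (Pi.single j c) = starRingEnd ℂ c • fwd n j := by
  simp [zvecd, Pi.single_apply, apply_ite]

lemma zvec_add_smul (z w : Fin n → ℂ) (c : ℂ) :
    zvec n (z + c • w) = zvec n z + c • zvec n w := by
  simp [zvec, add_smul, mul_smul, sum_add_distrib, smul_sum]

lemma zvecd_add_smul (z w : Fin n → ℂ) (c : ℂ) :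
    zvecd n (z + c • w) = zvecd n z + starRingEnd ℂ c • zvecd n w := by
  simp [zvecd, add_smul, mul_smul, sum_add_distrib, smul_sum]

lemma zc_ex (j : Fin n) : zc n (ex n j) = Pi.single j 1 := by
  ext k
  by_cases h : k = j <;> simp [zc, ex, h]

lemma zc_ey (j : Fin n) : zc n (ey n j) = Pi.single j Complex.I := by
  ext k
  by_cases h : k = j <;> simp [zc, ey, h]

lemma zc_add_smul (pt v : Dom n) (t : ℝ) :
    zc n (pt + t • v) = zc n pt + (t : ℂ) • zc n v := by
  ext j
  simp only [zc, Prod.fst_add, Prod.snd_add, Prod.smul_fst, Prod.smul_snd, Pi.add_apply,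
    Pi.smul_apply, smul_eq_mul]
  push_cast
  ring

lemma sum_zc_mul_conj (pt : Dom n) :
    ∑ j, zc n pt j * starRingEnd ℂ (zc n pt j) = nu n pt := by
  simp only [nu, zc, Complex.mul_conj, mul_comm Complex.I, Complex.normSq_add_mul_I]
  push_cast
  rfl

def nuDeriv (n : ℕ) (pt v : Dom n) : ℝ := 2 * ∑ j, (pt.1 j * v.1 j + pt.2 j * v.2 j)

lemma nu_add_smul (pt v : Dom n) (t : ℝ) :
    nu n (pt + t • v) = nu n pt + t • nuDeriv n pt v + t ^ 2 • nu n v := by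
  simp only [nu, nuDeriv, Prod.fst_add, Prod.snd_add, Prod.smul_fst, Prod.smul_snd,
    Pi.add_apply, Pi.smul_apply, smul_eq_mul, mul_sum, ← sum_add_distrib]
  refine sum_congr rfl fun j _ => ?_
  ring

lemma nuDeriv_ex (pt : Dom n) (j : Fin n) : nuDeriv n pt (ex n j) = 2 * pt.1 j := by
  simp [nuDeriv, ex, Pi.single_apply]

lemma nuDeriv_ey (pt : Dom n) (j : Fin n) : nuDeriv n pt (ey n j) = 2 * pt.2 j := by
  simp [nuDeriv, ey, Pi.single_apply]

lemma hasLineDerivAt_nu (pt v : Dom n) : HasLineDerivAt ℝ (nu n) (nuDeriv n pt v) pt v :=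
  hasLineDerivAt_of_eq_quadratic (nu_add_smul pt v)

end Coordinates

section Axial

variable {n : ℕ}

lemma zvecd_mul_zvec_add_smul (pt v : Dom n) (t : ℝ) :
    zvecd n (zc n (pt + t • v)) * zvec n (zc n (pt + t • v))
      = zvecd n (zc n pt) * zvec n (zc n pt)
        + (t : ℂ) • (zvecd n (zc n v) * zvec n (zc n pt) + zvecd n (zc n pt) * zvec n (zc n v))
        + (t : ℂ) ^ 2 • (zvecd n (zc n v) * zvec n (zc n v)) := by
  rw [zc_add_smul, zvec_add_smul, zvecd_add_smul, Complex.conj_ofReal]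
  simp only [add_mul, mul_add, smul_mul_assoc, mul_smul_comm, smul_smul, smul_add]
  module

lemma hasLineDerivAt_dual_zvecd_mul_zvec (φ : Module.Dual ℂ (Cl (2 * n))) (pt v : Dom n) :
    HasLineDerivAt ℝ (fun q => φ (zvecd n (zc n q) * zvec n (zc n q)))
      (φ (zvecd n (zc n v) * zvec n (zc n pt) + zvecd n (zc n pt) * zvec n (zc n v))) pt v := by
  refine hasLineDerivAt_of_eq_quadratic (a := φ (zvecd n (zc n pt) * zvec n (zc n pt)))
    (c := φ (zvecd n (zc n v) * zvec n (zc n v))) fun t => ?_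
  rw [zvecd_mul_zvec_add_smul]
  simp [Complex.real_smul]

variable (n) in
def axialDeriv (a₁ a₂ : ℝ → ℂ) (pt v : Dom n) : Cl (2 * n) :=
  (nuDeriv n pt v • deriv a₁ (nu n pt)) • 1
    + (nuDeriv n pt v • deriv a₂ (nu n pt)) • (zvecd n (zc n pt) * zvec n (zc n pt))
    + a₂ (nu n pt) • (zvecd n (zc n v) * zvec n (zc n pt) + zvecd n (zc n pt) * zvec n (zc n v))

lemma isWeakLineDeriv_axialDeriv {a₁ a₂ : ℝ → ℂ} (ha₁ : Differentiable ℝ a₁)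
    (ha₂ : Differentiable ℝ a₂) :
    IsWeakLineDeriv n
      (fun pt => a₁ (nu n pt) • 1 + a₂ (nu n pt) • (zvecd n (zc n pt) * zvec n (zc n pt)))
      (axialDeriv n a₁ a₂) := by
  intro φ pt v
  have h₁ := (ha₁ _).hasDerivAt.comp_hasLineDerivAt (hasLineDerivAt_nu pt v)
  have h₂ := (ha₂ _).hasDerivAt.comp_hasLineDerivAt (hasLineDerivAt_nu pt v)
  have h := (h₁.mul_const (φ 1)).add (h₂.mul (hasLineDerivAt_dual_zvecd_mul_zvec φ pt v))
  simpa only [map_add, map_smul, smul_eq_mul, axialDeriv, add_assoc] using h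

lemma wirtinger_axialDeriv (a₁ a₂ : ℝ → ℂ) (pt : Dom n) (j : Fin n) :
    (2⁻¹ : ℂ) • (axialDeriv n a₁ a₂ pt (ex n j) + Complex.I • axialDeriv n a₁ a₂ pt (ey n j))
      = (deriv a₁ (nu n pt) * zc n pt j) • 1
        + (deriv a₂ (nu n pt) * zc n pt j) • (zvecd n (zc n pt) * zvec n (zc n pt))
        + a₂ (nu n pt) • (fwd n j * zvec n (zc n pt)) := by
  simp only [axialDeriv, nuDeriv_ex, nuDeriv_ey, zc_ex, zc_ey, zvec_single, zvecd_single,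
    smul_mul_assoc, mul_smul_comm, Complex.real_smul, zc]
  push_cast
  match_scalars
  · ring
  · ring
  · simp only [map_one, Complex.conj_I]
    linear_combination (-a₂ (nu n pt) / 2) * Complex.I_sq
  · linear_combination (a₂ (nu n pt) / 2) * Complex.I_sq

lemma DzdOf_axialDeriv (a₁ a₂ : ℝ → ℂ) (pt : Dom n) :
    DzdOf n (axialDeriv n a₁ a₂) pt
      = (deriv a₁ (nu n pt) + ((n : ℂ) + 1) * a₂ (nu n pt)
          + (nu n pt : ℂ) * deriv a₂ (nu n pt)) • zvec n (zc n pt)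
        - a₂ (nu n pt) • (zvec n (zc n pt) * beta n) := by
  have hsum : DzdOf n (axialDeriv n a₁ a₂) pt
      = deriv a₁ (nu n pt) • zvec n (zc n pt)
        + deriv a₂ (nu n pt) • (zvec n (zc n pt) * (zvecd n (zc n pt) * zvec n (zc n pt)))
        + a₂ (nu n pt) • ((∑ j, fw n j * fwd n j) * zvec n (zc n pt)) := by
    simp only [DzdOf, wirtinger_axialDeriv, mul_add, mul_smul_comm, mul_one, sum_add_distrib,
      zvec, sum_mul, smul_sum, mul_assoc, mul_smul, smul_mul_assoc]
  rw [hsum, zvec_mul_zvecd_mul_zvec, sum_zc_mul_conj, sum_fw_mul_fwd, sub_mul,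
    zvec_mul_beta, smul_mul_assoc, one_mul]
  module

end Axial

theorem Dzd_of_axial_general (n : ℕ) (a₁ a₂ : ℝ → ℂ)
    (ha₁ : Differentiable ℝ a₁) (ha₂ : Differentiable ℝ a₂)
    (F : Dom n → Cl (2 * n))
    (hF : ∀ pt, F pt = a₁ (nu n pt) • (1 : Cl (2 * n)) +
      a₂ (nu n pt) • (zvecd n (zc n pt) * zvec n (zc n pt))) :
    ∃ F' : Dom n → Dom n → Cl (2 * n), IsWeakLineDeriv n F F' ∧
      ∀ pt, DzdOf n F' pt =
        (deriv a₁ (nu n pt) + ((n : ℂ) + 1) * a₂ (nu n pt)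
            + (nu n pt : ℂ) * deriv a₂ (nu n pt)) • zvec n (zc n pt)
          - a₂ (nu n pt) • (zvec n (zc n pt) * beta n) := by
  obtain rfl : F = fun pt =>
      a₁ (nu n pt) • 1 + a₂ (nu n pt) • (zvecd n (zc n pt) * zvec n (zc n pt)) := funext hF
  exact ⟨axialDeriv n a₁ a₂, isWeakLineDeriv_axialDeriv ha₁ ha₂, DzdOf_axialDeriv a₁ a₂⟩

/-- For differentiable `a₁, a₂ : ℝ → ℂ` and
`F = a₁(ν)·1 + a₂(ν)·𝐳†𝐳` with `ν = |z|²`, the function `F` is differentiable and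
`∂_z† F = (a₁′(ν) + (n+1)a₂(ν) + ν a₂′(ν))·𝐳 − a₂(ν)·𝐳β`. -/
theorem Dzd_of_axial (n : ℕ) (hn : 1 ≤ n) (a₁ a₂ : ℝ → ℂ)
    (ha₁ : Differentiable ℝ a₁) (ha₂ : Differentiable ℝ a₂)
    (F : Dom n → Cl (2 * n))
    (hF : ∀ pt, F pt = a₁ (nu n pt) • (1 : Cl (2 * n)) +
      a₂ (nu n pt) • (zvecd n (zc n pt) * zvec n (zc n pt))) :
    ∃ F' : Dom n → Dom n → Cl (2 * n), IsWeakLineDeriv n F F' ∧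
      ∀ pt, DzdOf n F' pt =
        (deriv a₁ (nu n pt) + ((n : ℂ) + 1) * a₂ (nu n pt)
            + (nu n pt : ℂ) * deriv a₂ (nu n pt)) • zvec n (zc n pt)
          - a₂ (nu n pt) • (zvec n (zc n pt) * beta n) :=
  Dzd_of_axial_general n a₁ a₂ ha₁ ha₂ F hF
end
end
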